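/- Let T be a closed brick, f : T → ℝ a K-integrable function, and Ψ(S) = ∫_S f its indefinite integral on the family Σ of closed sub-bricks of T. (i) If f is continuous at u ∈ int(T) with f(u) = t, then Ψ is strongly differentiable at u and Ψ'(u) = t. (ii) If f has a limit t at u ∈ int(T) in a direction α ∈ {−1,1}ⁿ, then Ψ is strongly differentiable at u in direction α and Ψ'_α(u) = t. -/

import Mathlib

open Set Filter MeasureTheory Topology

/-- A brick in ℝⁿ: a product of `n` bounded intervals. -/
def IsBrick {n : ℕ} (S : Set (Fin n → ℝ)) : Prop :=
  ∃ I : Fin n → Set ℝ,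
    (∀ k, (I k).OrdConnected ∧ Bornology.IsBounded (I k)) ∧ S = Set.univ.pi I

/-- The volume of a brick: the product of the lengths of its sides. -/
noncomputable def brickVol {n : ℕ} (S : Set (Fin n → ℝ)) : ℝ :=
  ∏ k : Fin n, (sSup ((fun x => x k) '' S) - sInf ((fun x => x k) '' S))

/-- A representation of a step function on `T`: a finite linear combination of
characteristic functions of bricks contained in `T`. -/
structure StepRepr {n : ℕ} (T : Set (Fin n → ℝ)) where
  M : ℕ
  c : Fin M → ℝ
  B : Fin M → Set (Fin n → ℝ)
  isBrick : ∀ j, IsBrick (B j)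
  subset : ∀ j, B j ⊆ T

/-- The step function determined by a representation. -/
noncomputable def StepRepr.fn {n : ℕ} {T : Set (Fin n → ℝ)} (g : StepRepr T) :
    (Fin n → ℝ) → ℝ :=
  fun x => ∑ j, g.c j * (g.B j).indicator (fun _ => (1 : ℝ)) x

/-- The integral of a step function. -/
noncomputable def StepRepr.integral {n : ℕ} {T : Set (Fin n → ℝ)} (g : StepRepr T) : ℝ :=
  ∑ j, g.c j * brickVol (g.B j)

/-- The sequence `F` converges nearly uniformly to `f` on `T`: it is uniformly bounded
on `T`, and for every `δ > 0` there are finitely many bricks (contained in `T`) of total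
volume `< δ` such that `F` converges uniformly to `f` on the complement of their union. -/
def NearlyUniformlyTo {n : ℕ} (T : Set (Fin n → ℝ)) (F : ℕ → (Fin n → ℝ) → ℝ)
    (f : (Fin n → ℝ) → ℝ) : Prop :=
  (∃ C : ℝ, ∀ m, ∀ x ∈ T, |F m x| ≤ C) ∧
  ∀ δ > (0 : ℝ), ∃ (M : ℕ) (B : Fin M → Set (Fin n → ℝ)),
    (∀ j, IsBrick (B j) ∧ B j ⊆ T) ∧ (∑ j, brickVol (B j)) < δ ∧
    TendstoUniformlyOn F f atTop (T \ ⋃ j, B j)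

/-- `f` is K-integrable on `T`: some sequence of step functions converges nearly
uniformly to `f`. -/
def KIntegrable {n : ℕ} (T : Set (Fin n → ℝ)) (f : (Fin n → ℝ) → ℝ) : Prop :=
  ∃ g : ℕ → StepRepr T, NearlyUniformlyTo T (fun m => (g m).fn) f

/-- `f` is K-integrable on `T` with K-integral `I`: some sequence of step functions
converges nearly uniformly to `f` and their integrals tend to `I`. -/
def HasKIntegral {n : ℕ} (T : Set (Fin n → ℝ)) (f : (Fin n → ℝ) → ℝ) (I : ℝ) : Prop :=
  ∃ g : ℕ → StepRepr T, NearlyUniformlyTo T (fun m => (g m).fn) f ∧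
    Filter.Tendsto (fun m => (g m).integral) Filter.atTop (nhds I)

/-- The open Euclidean ball in `ℝⁿ` of center `u` and radius `r`. -/
def EBall {n : ℕ} (u : Fin n → ℝ) (r : ℝ) : Set (Fin n → ℝ) :=
  {x | ∑ k, (x k - u k) ^ 2 < r ^ 2}

/-- The set `T_{x,α}` associated to a point `x` of the closed brick `[a, b]` and a
direction `α ∈ {-1,0,1}ⁿ`: the product of the intervals `[aₖ, xₖ)`, `{xₖ}`, `(xₖ, bₖ]`
according to the sign `αₖ`. -/
def dirSet {n : ℕ} (a b x : Fin n → ℝ) (α : Fin n → SignType) : Set (Fin n → ℝ) :=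
  {y | ∀ k, y k ∈ (match α k with
    | SignType.neg => Set.Ico (a k) (x k)
    | SignType.zero => ({x k} : Set ℝ)
    | SignType.pos => Set.Ioc (x k) (b k))}

/-- `f` has limit `L` at `x` in the direction `α`: the restriction of `f` to `T_{x,α}`
tends to `L` at `x`. -/
def HasDirLimit {n : ℕ} (a b : Fin n → ℝ) (f : (Fin n → ℝ) → ℝ) (x : Fin n → ℝ)
    (α : Fin n → SignType) (L : ℝ) : Prop :=
  Filter.Tendsto f (nhdsWithin x (dirSet a b x α)) (nhds L)

/-- The set of discontinuity points of the second kind of `f` on the closed brick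
`[a, b]`: interior points where `f` is discontinuous and fails to have a finite limit in
some nonzero direction `α ∈ {-1,0,1}ⁿ`. -/
def dis2 {n : ℕ} (a b : Fin n → ℝ) (f : (Fin n → ℝ) → ℝ) : Set (Fin n → ℝ) :=
  {x | x ∈ interior (Set.Icc a b) ∧ ¬ ContinuousWithinAt f (Set.Icc a b) x ∧
    ¬ ∀ α : Fin n → SignType, (∃ k, α k ≠ SignType.zero) →
        ∃ L : ℝ, HasDirLimit a b f x α L}

/-- `S` belongs to the family `Σ` of closed bricks contained in the closed brick
`[a, b]`. -/
def memSigma {n : ℕ} (a b : Fin n → ℝ) (S : Set (Fin n → ℝ)) : Prop :=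
  ∃ c d : Fin n → ℝ, a ≤ c ∧ c ≤ d ∧ d ≤ b ∧ S = Set.Icc c d

/-- `Ψ : Σ → ℝ` is strongly differentiable at `u` with strong derivative `t`: for every
`ε > 0` there is `δ > 0` such that `|Ψ(S)/λ(S) - t| < ε` for every `S ∈ Σ` with
`λ(S) > 0` and `S ⊆ B(u, δ)`. -/
def StronglyDiffAt {n : ℕ} (a b : Fin n → ℝ) (Ψ : Set (Fin n → ℝ) → ℝ)
    (u : Fin n → ℝ) (t : ℝ) : Prop :=
  ∀ ε > (0 : ℝ), ∃ δ > (0 : ℝ), ∀ S : Set (Fin n → ℝ), memSigma a b S →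
    0 < brickVol S → S ⊆ EBall u δ → |Ψ S / brickVol S - t| < ε

/-- `Ψ : Σ → ℝ` is strongly differentiable at `u` in the direction `α ∈ {-1,1}ⁿ` with
strong derivative `t`: for every `ε > 0` there is `δ > 0` such that
`|Ψ(S)/λ(S) - t| < ε` for every `S ∈ Σ` with `λ(S) > 0` and
`S ⊆ B(u, δ) ∩ closure T_{u,α}`. -/
def StronglyDiffDirAt {n : ℕ} (a b : Fin n → ℝ) (Ψ : Set (Fin n → ℝ) → ℝ)
    (u : Fin n → ℝ) (α : Fin n → SignType) (t : ℝ) : Prop :=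
  ∀ ε > (0 : ℝ), ∃ δ > (0 : ℝ), ∀ S : Set (Fin n → ℝ), memSigma a b S →
    0 < brickVol S → S ⊆ EBall u δ ∩ closure (dirSet a b u α) →
    |Ψ S / brickVol S - t| < ε

lemma ord_bounded_interval {s : Set ℝ} (hc : s.OrdConnected) (hb : Bornology.IsBounded s) :
    MeasurableSet s ∧ volume s = ENNReal.ofReal (sSup s - sInf s) := by
  refine ⟨hc.measurableSet, ?_⟩
  rcases s.eq_empty_or_nonempty with rfl | hne
  · simp [Real.sSup_empty, Real.sInf_empty]
  · obtain ⟨hbb, hba⟩ := isBounded_iff_bddBelow_bddAbove.mp hb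
    have h1 : Set.Ioo (sInf s) (sSup s) ⊆ s := by
      intro x hx
      obtain ⟨y, hy, hyx⟩ := exists_lt_of_csInf_lt hne hx.1
      obtain ⟨z, hz, hxz⟩ := exists_lt_of_lt_csSup hne hx.2
      exact hc.out hy hz ⟨hyx.le, hxz.le⟩
    have h2 : s ⊆ Set.Icc (sInf s) (sSup s) := fun x hx => ⟨csInf_le hbb hx, le_csSup hba hx⟩
    refine le_antisymm ?_ ?_
    · calc volume s ≤ volume (Set.Icc (sInf s) (sSup s)) := measure_mono h2
        _ = ENNReal.ofReal (sSup s - sInf s) := Real.volume_Icc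
    · calc ENNReal.ofReal (sSup s - sInf s) = volume (Set.Ioo (sInf s) (sSup s)) :=
          Real.volume_Ioo.symm
        _ ≤ volume s := measure_mono h1

lemma isBrick_volume {n : ℕ} {B : Set (Fin n → ℝ)} (h : IsBrick B) :
    MeasurableSet B ∧ volume B = ENNReal.ofReal (brickVol B) ∧ 0 ≤ brickVol B := by
  obtain ⟨I, hI, rfl⟩ := h
  have hmeas : MeasurableSet (Set.univ.pi I) :=
    MeasurableSet.univ_pi fun k => ((hI k).1).measurableSet
  refine ⟨hmeas, ?_⟩
  rcases Set.eq_empty_or_nonempty (Set.univ.pi I) with he | hne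
  · obtain ⟨k, hk⟩ := Set.univ_pi_eq_empty_iff.mp he
    have hfac : ∀ j : Fin n,
        sSup ((fun x => x j) '' Set.univ.pi I) - sInf ((fun x => x j) '' Set.univ.pi I) = 0 := by
      intro j
      rw [he]
      simp [Real.sSup_empty, Real.sInf_empty]
    have : brickVol (Set.univ.pi I) = 0 := by
      unfold brickVol
      exact Finset.prod_eq_zero (Finset.mem_univ k) (hfac k)
    rw [this, he]
    simp
  · have himg : ∀ k, (fun x => x k) '' Set.univ.pi I = I k := fun k =>
      Set.eval_image_univ_pi hne
    have hvol : ∀ k, volume (I k) = ENNReal.ofReal (sSup (I k) - sInf (I k)) := fun k =>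
      (ord_bounded_interval (hI k).1 (hI k).2).2
    have hIne : ∀ k, (I k).Nonempty := by
      intro k
      obtain ⟨x, hx⟩ := hne
      exact ⟨x k, hx k (Set.mem_univ k)⟩
    have hnn : ∀ k, 0 ≤ sSup (I k) - sInf (I k) := by
      intro k
      obtain ⟨hbb, hba⟩ := isBounded_iff_bddBelow_bddAbove.mp (hI k).2
      have := Real.sInf_le_sSup (I k) hbb hba
      linarith
    have hbv : brickVol (Set.univ.pi I) = ∏ k, (sSup (I k) - sInf (I k)) := by
      unfold brickVol
      exact Finset.prod_congr rfl fun k _ => by rw [himg k]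
    constructor
    · rw [volume_pi_pi, hbv, ENNReal.ofReal_prod_of_nonneg (fun k _ => hnn k)]
      exact Finset.prod_congr rfl fun k _ => hvol k
    · rw [hbv]
      exact Finset.prod_nonneg fun k _ => hnn k

lemma isBrick_Icc {n : ℕ} (c d : Fin n → ℝ) : IsBrick (Set.Icc c d) :=
  ⟨fun k => Set.Icc (c k) (d k),
   fun k => ⟨Set.ordConnected_Icc, Metric.isBounded_Icc _ _⟩, (Set.pi_univ_Icc c d).symm⟩

lemma StepRepr.fn_measurable {n : ℕ} {T : Set (Fin n → ℝ)} (g : StepRepr T) :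
    Measurable g.fn := by
  apply Finset.measurable_sum
  intro j _
  exact (measurable_const.indicator (isBrick_volume (g.isBrick j)).1).const_mul _

lemma StepRepr.fn_eq_zero {n : ℕ} {T : Set (Fin n → ℝ)} (g : StepRepr T)
    {x : Fin n → ℝ} (hx : x ∉ T) : g.fn x = 0 := by
  unfold StepRepr.fn
  refine Finset.sum_eq_zero fun j _ => ?_
  rw [Set.indicator_of_notMem (fun hxB => hx (g.subset j hxB))]
  ring

lemma StepRepr.integrable {n : ℕ} {T : Set (Fin n → ℝ)} (g : StepRepr T) :
    Integrable g.fn := by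
  apply integrable_finset_sum
  intro j _
  apply Integrable.const_mul
  rw [integrable_indicator_iff (isBrick_volume (g.isBrick j)).1]
  apply (integrableOn_const_iff enorm_ne_top).mpr
  right
  rw [(isBrick_volume (g.isBrick j)).2.1]
  exact ENNReal.ofReal_lt_top

lemma StepRepr.integral_eq {n : ℕ} {T : Set (Fin n → ℝ)} (g : StepRepr T) :
    ∫ x, g.fn x = g.integral := by
  unfold StepRepr.fn StepRepr.integral
  rw [integral_finset_sum]
  · refine Finset.sum_congr rfl fun j _ => ?_
    rw [MeasureTheory.integral_const_mul, integral_indicator_const (1 : ℝ)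
      (isBrick_volume (g.isBrick j)).1, measureReal_def, (isBrick_volume (g.isBrick j)).2.1,
      ENNReal.toReal_ofReal (isBrick_volume (g.isBrick j)).2.2]
    simp
  · intro j _
    apply Integrable.const_mul
    rw [integrable_indicator_iff (isBrick_volume (g.isBrick j)).1]
    apply (integrableOn_const_iff enorm_ne_top).mpr
    right
    rw [(isBrick_volume (g.isBrick j)).2.1]
    exact ENNReal.ofReal_lt_top

lemma hasKIntegral_eq {n : ℕ} {S : Set (Fin n → ℝ)} (hS : MeasurableSet S)
    (hSfin : volume S ≠ ⊤) {f : (Fin n → ℝ) → ℝ} {I : ℝ} (h : HasKIntegral S f I) :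
    IntegrableOn f S ∧ I = ∫ x in S, f x := by
  obtain ⟨g, ⟨⟨C, hC⟩, hnear⟩, hint⟩ := h
  set F : ℕ → (Fin n → ℝ) → ℝ := fun m => (g m).fn with hF
  -- exceptional sets
  have hexc : ∀ i : ℕ, ∃ E : Set (Fin n → ℝ),
      volume E ≤ ENNReal.ofReal (1 / (i + 1)) ∧
      ∀ x ∈ S \ E, Tendsto (fun m => F m x) atTop (nhds (f x)) := by
    intro i
    have hip : (0 : ℝ) < 1 / (i + 1) := by positivity
    obtain ⟨M, B, hB, hsum, hunif⟩ := hnear (1 / (i + 1)) hip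
    refine ⟨⋃ j, B j, ?_, ?_⟩
    · calc volume (⋃ j, B j) ≤ ∑ j, volume (B j) := measure_iUnion_fintype_le _ _
        _ = ∑ j, ENNReal.ofReal (brickVol (B j)) :=
            Finset.sum_congr rfl fun j _ => (isBrick_volume (hB j).1).2.1
        _ = ENNReal.ofReal (∑ j, brickVol (B j)) :=
            (ENNReal.ofReal_sum_of_nonneg fun j _ => (isBrick_volume (hB j).1).2.2).symm
        _ ≤ ENNReal.ofReal (1 / (i + 1)) := ENNReal.ofReal_le_ofReal hsum.le
    · intro x hx
      exact hunif.tendsto_at hx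
  choose E hEvol hEconv using hexc
  set Z := ⋂ i, E i with hZ
  have hZ0 : volume Z = 0 := by
    refine le_antisymm ?_ (zero_le)
    have h1 : Tendsto (fun i : ℕ => ENNReal.ofReal (1 / (i + 1))) atTop (nhds 0) := by
      rw [← ENNReal.ofReal_zero]
      apply ENNReal.tendsto_ofReal
      exact tendsto_one_div_add_atTop_nhds_zero_nat
    exact ge_of_tendsto' h1 fun i => le_trans (measure_mono (Set.iInter_subset E i)) (hEvol i)
  have hae : ∀ᵐ x ∂(volume.restrict S), Tendsto (fun m => F m x) atTop (nhds (f x)) := by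
    rw [ae_restrict_iff' hS]
    rw [ae_iff]
    refine measure_mono_null ?_ hZ0
    intro x hx
    simp only [Set.mem_setOf_eq, _root_.not_imp] at hx
    obtain ⟨hxS, hxn⟩ := hx
    by_contra hxZ
    have hex : ∃ i, x ∉ E i := by
      by_contra hall
      push_neg at hall
      exact hxZ (Set.mem_iInter.mpr hall)
    obtain ⟨i, hi⟩ := hex
    exact hxn (hEconv i x ⟨hxS, hi⟩)
  have hmeasF : ∀ m, AEStronglyMeasurable (F m) (volume.restrict S) :=
    fun m => ((g m).fn_measurable).aestronglyMeasurable.restrict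
  have hbound : ∀ m, ∀ᵐ x ∂(volume.restrict S), ‖F m x‖ ≤ C := by
    intro m
    rw [ae_restrict_iff' hS]
    exact ae_of_all _ fun x hx => hC m x hx
  have hCint : Integrable (fun _ => C) (volume.restrict S) := by
    apply (integrableOn_const_iff enorm_ne_top).mpr
    right
    exact lt_top_iff_ne_top.mpr hSfin
  have htend : Tendsto (fun m => ∫ x in S, F m x) atTop (nhds (∫ x in S, f x)) :=
    tendsto_integral_of_dominated_convergence _ hmeasF hCint hbound hae
  have hfmeas : AEStronglyMeasurable f (volume.restrict S) :=
    aestronglyMeasurable_of_tendsto_ae atTop hmeasF hae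
  have hfbd : ∀ᵐ x ∂(volume.restrict S), ‖f x‖ ≤ C := by
    filter_upwards [hae, ae_restrict_iff' hS |>.mpr (ae_of_all _ (fun x hx m => hC m x hx))]
      with x hx hbx
    exact le_of_tendsto (hx.norm) (Eventually.of_forall hbx)
  have hfint : IntegrableOn f S :=
    Integrable.mono' hCint hfmeas hfbd
  have hFint : ∀ m, ∫ x in S, F m x = (g m).integral := by
    intro m
    rw [← (g m).integral_eq, ← integral_indicator hS]
    congr 1
    funext x
    by_cases hx : x ∈ S
    · simp [hx, hF]
    · simp [hx, (g m).fn_eq_zero hx]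
  refine ⟨hfint, ?_⟩
  refine tendsto_nhds_unique hint ?_
  have : (fun m => (g m).integral) = fun m => ∫ x in S, F m x := funext fun m => (hFint m).symm
  rw [this]
  exact htend

lemma brickVol_Icc {n : ℕ} {c d : Fin n → ℝ} (hcd : c ≤ d) :
    brickVol (Set.Icc c d) = (volume (Set.Icc c d)).toReal := by
  rw [(isBrick_volume (isBrick_Icc c d)).2.1,
    ENNReal.toReal_ofReal (isBrick_volume (isBrick_Icc c d)).2.2]

lemma key_estimate {n : ℕ} {c d : Fin n → ℝ} (hcd : c ≤ d) {f : (Fin n → ℝ) → ℝ} {t ε : ℝ}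
    (hε : 0 ≤ ε) (hint : IntegrableOn f (Set.Icc c d)) (hvol : 0 < brickVol (Set.Icc c d))
    (hae : ∀ᵐ x ∂(volume.restrict (Set.Icc c d)), |f x - t| ≤ ε) :
    |(∫ x in Set.Icc c d, f x) / brickVol (Set.Icc c d) - t| ≤ ε := by
  set S := Set.Icc c d
  set V := brickVol S with hV
  have hVvol : V = (volume S).toReal := brickVol_Icc hcd
  have h1 : (∫ x in S, f x) - t * V = ∫ x in S, (f x - t) := by
    rw [integral_sub hint ((integrableOn_const_iff enorm_ne_top).mpr (Or.inr ?_))]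
    · rw [setIntegral_const, hVvol, measureReal_def]
      ring_nf
    · rw [hVvol] at hvol
      exact lt_of_le_of_lt (le_of_eq rfl) (by
        by_contra htop
        push_neg at htop
        rw [top_le_iff.mp htop] at hvol
        simp at hvol)
  have hfin : volume S ≠ ⊤ := by
    by_contra htop
    rw [hVvol, htop] at hvol
    simp at hvol
  have h2 : |∫ x in S, (f x - t)| ≤ ε * V := by
    have hsub : IntegrableOn (fun x => f x - t) S :=
      hint.sub ((integrableOn_const_iff enorm_ne_top).mpr (Or.inr (lt_top_iff_ne_top.mpr hfin)))
    calc |∫ x in S, (f x - t)| ≤ ∫ x in S, |f x - t| := by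
          simpa [Real.norm_eq_abs] using
            norm_integral_le_integral_norm (μ := volume.restrict S) (fun x => f x - t)
      _ ≤ ∫ x in S, ε := integral_mono_ae hsub.abs
          ((integrableOn_const_iff enorm_ne_top).mpr (Or.inr (lt_top_iff_ne_top.mpr hfin))) hae
      _ = ε * V := by rw [setIntegral_const, hVvol, smul_eq_mul, measureReal_def]; ring
  have hVpos : 0 < V := hvol
  rw [abs_le]
  constructor
  · rw [div_sub' (ne_of_gt hVpos), le_div_iff₀ hVpos]
    rw [abs_le] at h2
    have h1' := h1
    nlinarith [h2.1, h2.2]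
  · rw [div_sub' (ne_of_gt hVpos), div_le_iff₀ hVpos]
    rw [abs_le] at h2
    nlinarith [h2.1, h2.2]


lemma eball_dist {n : ℕ} {u : Fin n → ℝ} {δ : ℝ} (hδ : 0 < δ) {x : Fin n → ℝ}
    (hx : x ∈ EBall u δ) : ∀ k, |x k - u k| < δ := by
  intro k
  have h1 : (x k - u k) ^ 2 ≤ ∑ j, (x j - u j) ^ 2 :=
    Finset.single_le_sum (f := fun j => (x j - u j) ^ 2) (fun j _ => sq_nonneg _)
      (Finset.mem_univ k)
  have h2 : (x k - u k) ^ 2 < δ ^ 2 := lt_of_le_of_lt h1 hx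
  have h3 := Real.sqrt_lt_sqrt (sq_nonneg _) h2
  rwa [Real.sqrt_sq_eq_abs, Real.sqrt_sq hδ.le] at h3

lemma eball_mem_ball {n : ℕ} {u : Fin n → ℝ} {δ : ℝ} (hδ : 0 < δ) {x : Fin n → ℝ}
    (hx : x ∈ EBall u δ) : dist x u < δ := by
  rw [dist_pi_lt_iff hδ]
  intro k
  rw [Real.dist_eq]
  exact eball_dist hδ hx k

lemma closure_dirSet_mem {n : ℕ} (a b u : Fin n → ℝ) (α : Fin n → SignType)
    (hα : ∀ k, α k ≠ SignType.zero) {y : Fin n → ℝ}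
    (hy : y ∈ closure (dirSet a b u α)) (hne : ∀ k, y k ≠ u k) : y ∈ dirSet a b u α := by
  set lo : Fin n → ℝ := fun k => match α k with
    | SignType.neg => a k | SignType.zero => u k | SignType.pos => u k with hlo
  set hi : Fin n → ℝ := fun k => match α k with
    | SignType.neg => u k | SignType.zero => u k | SignType.pos => b k with hhi
  have hsub : dirSet a b u α ⊆ Set.Icc lo hi := by
    intro z hz
    rw [Set.mem_Icc]
    constructor <;> intro k <;> (
      have h := hz k
      rcases hk : α k with _ | _ | _ <;> rw [hk] at h <;>
        simp only [hlo, hhi, hk] <;> simp_all [Set.mem_Ico, Set.mem_Ioc] <;>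
        first
          | exact h.1
          | exact h.2.le
          | exact h.1.le
          | exact h.2)
  have hyIcc : y ∈ Set.Icc lo hi := closure_minimal hsub isClosed_Icc hy
  intro k
  have h1 := hyIcc.1 k
  have h2 := hyIcc.2 k
  rcases hk : α k with _ | _ | _
  · exact absurd hk (hα k)
  · simp only [hlo, hhi, hk] at h1 h2
    exact Set.mem_Ico.mpr ⟨h1, lt_of_le_of_ne h2 (hne k)⟩
  · simp only [hlo, hhi, hk] at h1 h2
    exact Set.mem_Ioc.mpr ⟨lt_of_le_of_ne h1 (Ne.symm (hne k)), h2⟩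

lemma null_slice {n : ℕ} (c d u : Fin n → ℝ) (k : Fin n) :
    volume (Set.Icc c d ∩ {y : Fin n → ℝ | y k = u k}) = 0 := by
  have hsub : Set.Icc c d ∩ {y : Fin n → ℝ | y k = u k} ⊆
      Set.univ.pi (fun i => if i = k then ({u k} : Set ℝ) else Set.Icc (c i) (d i)) := by
    rintro y ⟨hy, hyk⟩ i _
    by_cases hik : i = k
    · subst hik
      simpa using hyk
    · simp only [hik, if_false]
      exact ⟨hy.1 i, hy.2 i⟩
  refine measure_mono_null hsub ?_
  rw [volume_pi_pi]
  refine Finset.prod_eq_zero (Finset.mem_univ k) ?_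
  simp

/-- Let `Ψ` be the indefinite integral of a K-integrable function `f` on the closed
brick `T = [a, b]`.  (i) If `f` is continuous at an interior point `u` with `f(u) = t`,
then `Ψ` is strongly differentiable at `u` with `Ψ'(u) = t`.  (ii) If `f` has limit `t`
at `u` in a direction `α ∈ {-1,1}ⁿ`, then `Ψ` is strongly differentiable at `u` in the
direction `α` with `Ψ'_α(u) = t`. -/
theorem indefinite_integral_strongly_differentiable {n : ℕ} (hn : 1 ≤ n)
    (a b : Fin n → ℝ) (f : (Fin n → ℝ) → ℝ) (hf : KIntegrable (Set.Icc a b) f)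
    (Ψ : Set (Fin n → ℝ) → ℝ)
    (hΨ : ∀ S : Set (Fin n → ℝ), memSigma a b S → HasKIntegral S f (Ψ S)) :
    (∀ u ∈ interior (Set.Icc a b), ∀ t : ℝ,
      ContinuousWithinAt f (Set.Icc a b) u → f u = t → StronglyDiffAt a b Ψ u t) ∧
    (∀ u ∈ interior (Set.Icc a b), ∀ α : Fin n → SignType,
      (∀ k, α k ≠ SignType.zero) → ∀ t : ℝ, HasDirLimit a b f u α t →
        StronglyDiffDirAt a b Ψ u α t) := by
  constructor
  · intro u _ t hcont hft ε hε
    have hε2 : (0 : ℝ) < ε / 2 := by linarith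
    rw [Metric.continuousWithinAt_iff] at hcont
    obtain ⟨δ, hδ, hδprop⟩ := hcont (ε / 2) hε2
    refine ⟨δ, hδ, ?_⟩
    intro S hSmem hSvol hSsub
    obtain ⟨c, d, hac, hcd, hdb, rfl⟩ := hSmem
    have hIcc : Set.Icc c d ⊆ Set.Icc a b := Set.Icc_subset_Icc hac hdb
    have hmeas : MeasurableSet (Set.Icc c d) := measurableSet_Icc
    have hfin : volume (Set.Icc c d) ≠ ⊤ := by
      rw [(isBrick_volume (isBrick_Icc c d)).2.1]
      exact ENNReal.ofReal_ne_top
    obtain ⟨hfint, hΨeq⟩ := hasKIntegral_eq hmeas hfin (hΨ _ ⟨c, d, hac, hcd, hdb, rfl⟩)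
    rw [hΨeq]
    have hb : ∀ x ∈ Set.Icc c d, |f x - t| ≤ ε / 2 := by
      intro x hx
      have hd := eball_mem_ball hδ (hSsub hx)
      have h := hδprop (hIcc hx) hd
      rw [hft, Real.dist_eq] at h
      exact h.le
    have hae : ∀ᵐ x ∂(volume.restrict (Set.Icc c d)), |f x - t| ≤ ε / 2 :=
      (ae_restrict_iff' hmeas).mpr (ae_of_all _ hb)
    have hkey := key_estimate hcd hε2.le hfint hSvol hae
    linarith [abs_nonneg ((∫ x in Set.Icc c d, f x) / brickVol (Set.Icc c d) - t)]
  · intro u _ α hα t hdir ε hε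
    have hε2 : (0 : ℝ) < ε / 2 := by linarith
    rw [HasDirLimit, Metric.tendsto_nhdsWithin_nhds] at hdir
    obtain ⟨δ, hδ, hδprop⟩ := hdir (ε / 2) hε2
    refine ⟨δ, hδ, ?_⟩
    intro S hSmem hSvol hSsub
    obtain ⟨c, d, hac, hcd, hdb, rfl⟩ := hSmem
    have hmeas : MeasurableSet (Set.Icc c d) := measurableSet_Icc
    have hfin : volume (Set.Icc c d) ≠ ⊤ := by
      rw [(isBrick_volume (isBrick_Icc c d)).2.1]
      exact ENNReal.ofReal_ne_top
    obtain ⟨hfint, hΨeq⟩ := hasKIntegral_eq hmeas hfin (hΨ _ ⟨c, d, hac, hcd, hdb, rfl⟩)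
    rw [hΨeq]
    have hb : ∀ x ∈ Set.Icc c d, (∀ k, x k ≠ u k) → |f x - t| ≤ ε / 2 := by
      intro x hx hxk
      have hmem := hSsub hx
      have hxd : x ∈ dirSet a b u α := closure_dirSet_mem a b u α hα hmem.2 hxk
      have h := hδprop hxd (eball_mem_ball hδ hmem.1)
      rw [Real.dist_eq] at h
      exact h.le
    have hnull : volume (⋃ k, Set.Icc c d ∩ {y : Fin n → ℝ | y k = u k}) = 0 :=
      measure_iUnion_null fun k => null_slice c d u k
    have hae : ∀ᵐ x ∂(volume.restrict (Set.Icc c d)), |f x - t| ≤ ε / 2 := by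
      rw [ae_restrict_iff' hmeas, ae_iff]
      refine measure_mono_null ?_ hnull
      intro x hx
      simp only [Set.mem_setOf_eq, _root_.not_imp] at hx
      obtain ⟨hxS, hxn⟩ := hx
      have : ¬ ∀ k, x k ≠ u k := fun hk => hxn (hb x hxS hk)
      push_neg at this
      obtain ⟨k, hk⟩ := this
      exact Set.mem_iUnion.mpr ⟨k, hxS, hk⟩
    have hkey := key_estimate hcd hε2.le hfint hSvol hae
    linarith [abs_nonneg ((∫ x in Set.Icc c d, f x) / brickVol (Set.Icc c d) - t)]
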